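/- arXiv:2005.02441 — 4 statements merged into one kernel-verified Lean document; each statement's English description precedes it below -/
import Mathlib

section
/- Proposition 1, case m_B < μ_B (Eq. (12)): assume μ_B > m_B ≥ 1 and N_A ≥ 1. Let F₁ be the κ-μ shadowed CDF with parameters (ḡ, κ, μ, m) = (N_B·ȳ_B, κ_B, N_B·μ_B, N_B·m_B). Then for every x ≥ 0, [F₁(x)]^{N_A} = 1 + Σ_{k=1}^{N_A} (−1)^k·C(N_A,k)·Σ_{c=0}^{k} C(k,c)·Σ_{(p₁,…,p_{ν_B})∈ρ(c,ν_B)} (c!/(p₁!⋯p_{ν_B}!))·∏_{q=1}^{ν_B} [ (1/Δ₂ᴮ)^{ν_B−q}/(ν_B−q)!·Σ_{w=1}^{q} Aᴮ₂_w ]^{p_q}·Σ_{(s₁,…,s_{η_B})∈ρ(k−c,η_B)} ((k−c)!/(s₁!⋯s_{η_B}!))·∏_{t=1}^{η_B} [ (1/Δ₁ᴮ)^{η_B−t}/(η_B−t)!·Σ_{w=1}^{t} Aᴮ₁_w ]^{s_t}·exp(−x(k−c)/Δ₁ᴮ − x·c/Δ₂ᴮ)·x^{Σ_{t=1}^{η_B}(η_B−t)s_t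 + Σ_{q=1}^{ν_B}(ν_B−q)p_q}. -/
/-! Each of the two tails of `F` is `e^{-x/Δ}` times a polynomial in `x`: exchanging the order of
summation in `Σ_j A_j Σ_{r ≤ n-j} (x/Δ)^r / r!` collects the coefficient of `x^{n-1-q}` as
`(1/Δ)^{n-1-q} / (n-1-q)! · Σ_{w ≤ q+1} A_w`. Writing `F = 1 - (E₂T₂ + E₁T₁)`, the power `F^{N_A}`
is expanded by the binomial theorem twice, and the powers of the polynomials `T₁`, `T₂` by the
multinomial theorem, which is where the sums over `ρ(c, n)` come from. -/

/- κ-μ shadowed parameters and mixture coefficients (case m < μ). -/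

noncomputable def Δ₁ (g κ : ℝ) (μ : ℕ) : ℝ := g / (μ * (1 + κ))

noncomputable def Δ₂ (g κ : ℝ) (μ m : ℕ) : ℝ := ((μ * κ + m) / m) * g / (μ * (1 + κ))

noncomputable def A1 (κ : ℝ) (μ m j : ℕ) : ℝ :=
  (-1 : ℝ) ^ m * (Nat.choose (m + j - 2) (j - 1) : ℝ) *
    ((m : ℝ) / (μ * κ + m)) ^ m * ((μ * κ) / (μ * κ + m)) ^ (-(m : ℤ) - j + 1)

noncomputable def A2 (κ : ℝ) (μ m j : ℕ) : ℝ :=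
  (-1 : ℝ) ^ (j - 1) * (Nat.choose (μ - m + j - 2) (j - 1) : ℝ) *
    ((m : ℝ) / (μ * κ + m)) ^ (j - 1) * ((μ * κ) / (μ * κ + m)) ^ ((m : ℤ) - μ - j + 1)

/-- The κ-μ shadowed CDF in the case `m < μ`. -/
noncomputable def Fcdf1 (g κ : ℝ) (μ m : ℕ) (x : ℝ) : ℝ :=
  1 - (∑ j ∈ Finset.Icc 1 (μ - m), A1 κ μ m j * Real.exp (-x / Δ₁ g κ μ) *
        ∑ r ∈ Finset.range (μ - m - j + 1), (x / Δ₁ g κ μ) ^ r / (Nat.factorial r : ℝ))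
    - ∑ j ∈ Finset.Icc 1 m, A2 κ μ m j * Real.exp (-x / Δ₂ g κ μ m) *
        ∑ r ∈ Finset.range (m - j + 1), (x / Δ₂ g κ μ m) ^ r / (Nat.factorial r : ℝ)

open Finset Nat

theorem one_sub_pow_eq_one_add_sum_Icc {R : Type*} [CommRing R] (t : R) (n : ℕ) :
    (1 - t) ^ n = 1 + ∑ k ∈ Icc 1 n, (-1) ^ k * (n.choose k : R) * t ^ k := by
  rw [sub_eq_neg_add, add_pow, sum_range_eq_add_Ico _ n.succ_pos, Nat.succ_eq_add_one,
    Ico_add_one_right_eq_Icc]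
  congr 1
  · simp
  · exact sum_congr rfl fun k _ => by rw [neg_pow]; ring

theorem sum_Icc_mul_sum_range_eq_sum_range {R : Type*} [NonUnitalNonAssocSemiring R] (n : ℕ)
    (a b : ℕ → R) :
    ∑ j ∈ Icc 1 n, a j * ∑ r ∈ range (n - j + 1), b r
      = ∑ q ∈ range n, (∑ w ∈ Icc 1 (q + 1), a w) * b (n - 1 - q) := by
  simp_rw [mul_sum, sum_mul]
  rw [sum_comm' (t' := range n) (s' := fun r => Icc 1 (n - r)) (fun j r => by
    simp only [mem_Icc, mem_range]; omega), ← sum_range_reflect]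
  refine sum_congr rfl fun q hq => ?_
  rw [show n - (n - 1 - q) = q + 1 by grind]

theorem sum_pow_eq_sum_antidiagonalTuple {K : Type*} [Field K] [CharZero K] {n : ℕ}
    (f : Fin n → K) (c : ℕ) :
    (∑ i, f i) ^ c =
      ∑ p ∈ Nat.antidiagonalTuple n c, ((c ! : K) / ∏ i, ((p i)! : K)) * ∏ i, f i ^ p i := by
  rw [← piAntidiag_univ_fin_eq_antidiagonalTuple, sum_pow_eq_sum_piAntidiag]
  refine sum_congr rfl fun p hp => ?_
  have hmul := Nat.multinomial_spec univ p
  rw [(mem_piAntidiag.1 hp).1] at hmul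
  congr 1
  rw [eq_div_iff (prod_ne_zero_iff.2 fun i _ => Nat.cast_ne_zero.2 (factorial_ne_zero _)),
    ← Nat.cast_prod, ← Nat.cast_mul, mul_comm, hmul]

theorem sum_mul_pow_pow_eq_sum_antidiagonalTuple {K : Type*} [Field K] [CharZero K] {n : ℕ}
    (β : Fin n → K) (e : Fin n → ℕ) (x : K) (c : ℕ) :
    (∑ i, β i * x ^ e i) ^ c =
      ∑ p ∈ Nat.antidiagonalTuple n c,
        ((c ! : K) / ∏ i, ((p i)! : K)) * ((∏ i, β i ^ p i) * x ^ ∑ i, e i * p i) := by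
  rw [sum_pow_eq_sum_antidiagonalTuple]
  simp_rw [mul_pow, ← pow_mul, prod_mul_distrib, prod_pow_eq_pow_sum]

theorem mul_sum_pow_mul_mul_sum_pow {K : Type*} [Field K] [CharZero K] {η ν : ℕ}
    (β₁ : Fin η → K) (e₁ : Fin η → ℕ) (β₂ : Fin ν → K) (e₂ : Fin ν → ℕ) (E₁ E₂ x : K)
    (c d : ℕ) :
    (E₂ * ∑ q, β₂ q * x ^ e₂ q) ^ c * (E₁ * ∑ t, β₁ t * x ^ e₁ t) ^ d =
      ∑ p ∈ Nat.antidiagonalTuple ν c, ((c ! : K) / ∏ q, ((p q)! : K)) * (∏ q, β₂ q ^ p q) *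
        ∑ s ∈ Nat.antidiagonalTuple η d, ((d ! : K) / ∏ t, ((s t)! : K)) * (∏ t, β₁ t ^ s t) *
          (E₁ ^ d * E₂ ^ c) * x ^ ((∑ t, e₁ t * s t) + ∑ q, e₂ q * p q) := by
  rw [mul_pow, mul_pow, sum_mul_pow_pow_eq_sum_antidiagonalTuple,
    sum_mul_pow_pow_eq_sum_antidiagonalTuple]
  simp only [mul_sum, sum_mul]
  rw [sum_comm]
  exact sum_congr rfl fun p _ => sum_congr rfl fun s _ => by ring

theorem one_sub_mul_sum_sub_mul_sum_pow {K : Type*} [Field K] [CharZero K] {η ν : ℕ}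
    (β₁ : Fin η → K) (e₁ : Fin η → ℕ) (β₂ : Fin ν → K) (e₂ : Fin ν → ℕ) (E₁ E₂ x : K)
    (N : ℕ) :
    (1 - E₁ * ∑ t, β₁ t * x ^ e₁ t - E₂ * ∑ q, β₂ q * x ^ e₂ q) ^ N =
      1 + ∑ k ∈ Icc 1 N, (-1) ^ k * (N.choose k : K) * ∑ c ∈ range (k + 1), (k.choose c : K) *
        ∑ p ∈ Nat.antidiagonalTuple ν c, ((c ! : K) / ∏ q, ((p q)! : K)) * (∏ q, β₂ q ^ p q) *
          ∑ s ∈ Nat.antidiagonalTuple η (k - c), (((k - c)! : K) / ∏ t, ((s t)! : K)) *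
            (∏ t, β₁ t ^ s t) * (E₁ ^ (k - c) * E₂ ^ c) *
            x ^ ((∑ t, e₁ t * s t) + ∑ q, e₂ q * p q) := by
  rw [sub_sub, add_comm (E₁ * _), one_sub_pow_eq_one_add_sum_Icc]
  refine congrArg _ (sum_congr rfl fun k _ => congrArg _ ?_)
  rw [add_pow]
  exact sum_congr rfl fun c _ => by rw [mul_comm, mul_sum_pow_mul_mul_sum_pow]

theorem sum_Icc_mul_exp_mul_sum_range_pow_div_factorial (n : ℕ) (a : ℕ → ℝ) (D x : ℝ) :
    ∑ j ∈ Icc 1 n, a j * Real.exp (-x / D) * ∑ r ∈ range (n - j + 1), (x / D) ^ r / (r ! : ℝ) =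
      Real.exp (-x / D) * ∑ q : Fin n,
        ((1 / D) ^ (n - 1 - q) / ((n - 1 - q)! : ℝ) * ∑ w ∈ Icc 1 ((q : ℕ) + 1), a w) *
          x ^ (n - 1 - q) := by
  calc _ = Real.exp (-x / D) *
        ∑ j ∈ Icc 1 n, a j * ∑ r ∈ range (n - j + 1), (x / D) ^ r / (r ! : ℝ) := by
        rw [mul_sum]
        exact sum_congr rfl fun j _ => by ring
    _ = _ := by
        rw [sum_Icc_mul_sum_range_eq_sum_range, ← Fin.sum_univ_eq_sum_range]
        exact congrArg _ (sum_congr rfl fun q _ => by ring)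

theorem exp_div_pow_mul_exp_div_pow (x D₁ D₂ : ℝ) (a b : ℕ) :
    Real.exp (-x / D₁) ^ a * Real.exp (-x / D₂) ^ b = Real.exp (-x * a / D₁ - x * b / D₂) := by
  rw [← Real.exp_nat_mul, ← Real.exp_nat_mul, ← Real.exp_add]
  ring_nf

-- `ρ(c, n)` is `Finset.Nat.antidiagonalTuple n c`; `η_B = N_B μ_B - N_B m_B`, `ν_B = N_B m_B`.
open Finset in
theorem stmt2_general (yB κB : ℝ) (μB mB NB NA : ℕ) :
    ∀ x : ℝ, 0 ≤ x →
      (Fcdf1 (NB * yB) κB (NB * μB) (NB * mB) x) ^ NA =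
        1 + ∑ k ∈ Finset.Icc 1 NA, (-1 : ℝ) ^ k * (Nat.choose NA k : ℝ) *
          ∑ c ∈ Finset.range (k + 1), (Nat.choose k c : ℝ) *
            ∑ p ∈ Finset.Nat.antidiagonalTuple (NB * mB) c,
              ((Nat.factorial c : ℝ) / ∏ q, (Nat.factorial (p q) : ℝ)) *
              (∏ q : Fin (NB * mB),
                ((1 / Δ₂ (NB * yB) κB (NB * μB) (NB * mB)) ^ (NB * mB - 1 - q.1) /
                    (Nat.factorial (NB * mB - 1 - q.1) : ℝ) *
                  ∑ w ∈ Finset.Icc 1 (q.1 + 1), A2 κB (NB * μB) (NB * mB) w) ^ (p q)) *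
              ∑ s ∈ Finset.Nat.antidiagonalTuple (NB * μB - NB * mB) (k - c),
                ((Nat.factorial (k - c) : ℝ) / ∏ t, (Nat.factorial (s t) : ℝ)) *
                (∏ t : Fin (NB * μB - NB * mB),
                  ((1 / Δ₁ (NB * yB) κB (NB * μB)) ^ (NB * μB - NB * mB - 1 - t.1) /
                      (Nat.factorial (NB * μB - NB * mB - 1 - t.1) : ℝ) *
                    ∑ w ∈ Finset.Icc 1 (t.1 + 1), A1 κB (NB * μB) (NB * mB) w) ^ (s t)) *
                Real.exp (-x * ((k - c : ℕ) : ℝ) / Δ₁ (NB * yB) κB (NB * μB)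
                    - x * (c : ℝ) / Δ₂ (NB * yB) κB (NB * μB) (NB * mB)) *
                x ^ ((∑ t : Fin (NB * μB - NB * mB), (NB * μB - NB * mB - 1 - t.1) * s t)
                    + (∑ q : Fin (NB * mB), (NB * mB - 1 - q.1) * p q)) := by
  intro x _
  rw [Fcdf1, sum_Icc_mul_exp_mul_sum_range_pow_div_factorial,
    sum_Icc_mul_exp_mul_sum_range_pow_div_factorial, one_sub_mul_sum_sub_mul_sum_pow]
  simp only [exp_div_pow_mul_exp_div_pow]

open Finset in
/-- Proposition 1, case `m_B < μ_B` (Eq. (12)): closed form for the `N_A`-th power of the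
Bob-side κ-μ shadowed CDF with parameters `(N_B ȳ_B, κ_B, N_B μ_B, N_B m_B)`.
Here `η_B = N_B μ_B - N_B m_B`, `ν_B = N_B m_B`, and `ρ(c, n)` is realized by
`Finset.Nat.antidiagonalTuple n c`. -/
theorem stmt2 (yB κB : ℝ) (μB mB NB NA : ℕ)
    (hyB : 0 < yB) (hκB : 0 < κB) (hmB : 1 ≤ mB) (hμB : mB < μB)
    (hNB : 1 ≤ NB) (hNA : 1 ≤ NA) :
    ∀ x : ℝ, 0 ≤ x →
      (Fcdf1 (NB * yB) κB (NB * μB) (NB * mB) x) ^ NA =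
        1 + ∑ k ∈ Finset.Icc 1 NA, (-1 : ℝ) ^ k * (Nat.choose NA k : ℝ) *
          ∑ c ∈ Finset.range (k + 1), (Nat.choose k c : ℝ) *
            ∑ p ∈ Finset.Nat.antidiagonalTuple (NB * mB) c,
              ((Nat.factorial c : ℝ) / ∏ q, (Nat.factorial (p q) : ℝ)) *
              (∏ q : Fin (NB * mB),
                ((1 / Δ₂ (NB * yB) κB (NB * μB) (NB * mB)) ^ (NB * mB - 1 - q.1) /
                    (Nat.factorial (NB * mB - 1 - q.1) : ℝ) *
                  ∑ w ∈ Finset.Icc 1 (q.1 + 1), A2 κB (NB * μB) (NB * mB) w) ^ (p q)) *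
              ∑ s ∈ Finset.Nat.antidiagonalTuple (NB * μB - NB * mB) (k - c),
                ((Nat.factorial (k - c) : ℝ) / ∏ t, (Nat.factorial (s t) : ℝ)) *
                (∏ t : Fin (NB * μB - NB * mB),
                  ((1 / Δ₁ (NB * yB) κB (NB * μB)) ^ (NB * μB - NB * mB - 1 - t.1) /
                      (Nat.factorial (NB * μB - NB * mB - 1 - t.1) : ℝ) *
                    ∑ w ∈ Finset.Icc 1 (t.1 + 1), A1 κB (NB * μB) (NB * mB) w) ^ (s t)) *
                Real.exp (-x * ((k - c : ℕ) : ℝ) / Δ₁ (NB * yB) κB (NB * μB)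
                    - x * (c : ℝ) / Δ₂ (NB * yB) κB (NB * μB) (NB * mB)) *
                x ^ ((∑ t : Fin (NB * μB - NB * mB), (NB * μB - NB * mB - 1 - t.1) * s t)
                    + (∑ q : Fin (NB * mB), (NB * mB - 1 - q.1) * p q)) :=
  stmt2_general yB κB μB mB NB NA
end

section
/- Small-argument behavior of the κ-μ shadowed CDF (case m ≥ μ, used in Appendix C): assume m ≥ μ ≥ 1 and let F be the κ-μ shadowed CDF. Then lim_{x→0⁺} F(x)/x^μ = m^m·μ^{μ−1}·(1+κ)^μ/(ḡ^μ·(μκ+m)^m·(μ−1)!). -/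
noncomputable def Bco (κ : ℝ) (μ m j : ℕ) : ℝ :=
  (Nat.choose (m - μ) j : ℝ) * ((m : ℝ) / (μ * κ + m)) ^ j *
    ((μ * κ) / (μ * κ + m)) ^ (m - μ - j)

/-- The κ-μ shadowed CDF in the case `m ≥ μ`. -/
noncomputable def Fcdf2 (g κ : ℝ) (μ m : ℕ) (x : ℝ) : ℝ :=
  1 - ∑ j ∈ Finset.range (m - μ + 1), Bco κ μ m j * Real.exp (-x / Δ₂ g κ μ m) *
        ∑ r ∈ Finset.range (m - j), (x / Δ₂ g κ μ m) ^ r / (Nat.factorial r : ℝ)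

/-!
Since the mixture weights `Bco κ μ m j` sum to `1` (binomial theorem), the CDF is the mixture
`F x = ∑ⱼ Bco κ μ m j * P (m - j) (x / Δ₂)` of regularized lower incomplete gamma functions, and
`P n t ~ tⁿ / n!` as `t → 0`. Since `m - j ≥ μ`, only the term `j = m - μ` is of order `x ^ μ`; it
contributes `Bco κ μ m (m - μ) / (Δ₂ ^ μ * μ!)`, which is the stated constant.
-/

open Filter Finset Real Topology

lemma tendsto_exp_sub_sum_div_pow (n : ℕ) :
    Tendsto (fun t : ℝ => (exp t - ∑ r ∈ range n, t ^ r / r.factorial) / t ^ n)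
      (𝓝[≠] 0) (𝓝 (1 / n.factorial)) := by
  set C : ℝ := ((n + 1).succ : ℝ) / ((n + 1).factorial * (n + 1 : ℕ))
  have hbound : ∀ᶠ t : ℝ in 𝓝[≠] 0,
      |(exp t - ∑ r ∈ range n, t ^ r / r.factorial) / t ^ n - 1 / n.factorial| ≤ C * |t| := by
    filter_upwards [self_mem_nhdsWithin,
      nhdsWithin_le_nhds (Metric.closedBall_mem_nhds (0 : ℝ) one_pos)] with t ht0 ht1
    have ht : |t| ≤ 1 := by simpa using ht1
    have htn : 0 < |t| ^ n := pow_pos (abs_pos.mpr ht0) n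
    have hremainder : (exp t - ∑ r ∈ range n, t ^ r / r.factorial) / t ^ n - 1 / n.factorial
        = (exp t - ∑ r ∈ range (n + 1), t ^ r / r.factorial) / t ^ n := by
      have : t ^ n ≠ 0 := pow_ne_zero n ht0
      rw [sum_range_succ]
      field_simp
      ring
    rw [hremainder, abs_div, abs_pow, div_le_iff₀ htn]
    calc _ ≤ |t| ^ (n + 1) * C := exp_bound ht n.succ_pos
      _ = C * |t| * |t| ^ n := by ring
  have hC : Tendsto (fun t : ℝ => C * |t|) (𝓝[≠] 0) (𝓝 0) := by
    have hcont : Continuous fun t : ℝ => C * |t| := continuous_const.mul continuous_abs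
    exact (hcont.tendsto' 0 0 (by simp)).mono_left nhdsWithin_le_nhds
  rw [tendsto_iff_norm_sub_tendsto_zero]
  exact squeeze_zero' (Eventually.of_forall fun _ => norm_nonneg _) hbound hC

/-- The regularized lower incomplete gamma function `P(n, t) = γ(n, t) / Γ(n)` at integer order. -/
noncomputable def regLowerGamma (n : ℕ) (t : ℝ) : ℝ :=
  1 - exp (-t) * ∑ r ∈ range n, t ^ r / r.factorial

lemma tendsto_regLowerGamma_div_pow (n : ℕ) :
    Tendsto (fun t => regLowerGamma n t / t ^ n) (𝓝[≠] 0) (𝓝 (1 / n.factorial)) := by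
  have hexp : Tendsto (fun t : ℝ => exp (-t)) (𝓝[≠] 0) (𝓝 1) := by
    have hcont : Continuous fun t : ℝ => exp (-t) := by fun_prop
    exact (hcont.tendsto' 0 1 (by simp)).mono_left nhdsWithin_le_nhds
  refine (one_mul (1 / (n.factorial : ℝ)) ▸ hexp.mul (tendsto_exp_sub_sum_div_pow n)).congr
    fun t => ?_
  rw [regLowerGamma, ← mul_div_assoc, mul_sub, ← exp_add, neg_add_cancel, exp_zero]

lemma tendsto_regLowerGamma_div_pow_of_lt {k n : ℕ} (h : k < n) :
    Tendsto (fun t => regLowerGamma n t / t ^ k) (𝓝[≠] 0) (𝓝 0) := by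
  have hpow : Tendsto (fun t : ℝ => t ^ (n - k)) (𝓝[≠] 0) (𝓝 0) := by
    simpa [zero_pow (Nat.sub_ne_zero_of_lt h)] using
      ((continuous_pow (n - k)).tendsto (0 : ℝ)).mono_left nhdsWithin_le_nhds
  refine (zero_mul (1 / (n.factorial : ℝ)) ▸ hpow.mul (tendsto_regLowerGamma_div_pow n)).congr'
    ?_
  filter_upwards [self_mem_nhdsWithin] with t (ht : t ≠ 0)
  rw [← pow_sub_mul_pow t h.le]
  field_simp

section KappaMuShadowed

variable {g κ : ℝ} {μ m : ℕ}

lemma sum_Bco_eq_one (h : μ * κ + m ≠ 0) : ∑ j ∈ range (m - μ + 1), Bco κ μ m j = 1 := by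
  have hpq : (m : ℝ) / (μ * κ + m) + μ * κ / (μ * κ + m) = 1 := by
    field_simp
    ring
  have hbinom := add_pow ((m : ℝ) / (μ * κ + m)) (μ * κ / (μ * κ + m)) (m - μ)
  rw [hpq, one_pow] at hbinom
  rw [hbinom]
  exact sum_congr rfl fun j _ => by rw [Bco]; ring

lemma Fcdf2_eq_sum_regLowerGamma (h : μ * κ + m ≠ 0) (x : ℝ) :
    Fcdf2 g κ μ m x =
      ∑ j ∈ range (m - μ + 1), Bco κ μ m j * regLowerGamma (m - j) (x / Δ₂ g κ μ m) := by
  rw [Fcdf2, ← sum_Bco_eq_one h, ← sum_sub_distrib]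
  exact sum_congr rfl fun j _ => by rw [regLowerGamma, neg_div]; ring

lemma tendsto_sum_Bco_mul_regLowerGamma_div_pow (hm : μ ≤ m) :
    Tendsto (fun t => ∑ j ∈ range (m - μ + 1), Bco κ μ m j * (regLowerGamma (m - j) t / t ^ μ))
      (𝓝[≠] 0) (𝓝 (Bco κ μ m (m - μ) / μ.factorial)) := by
  have hlower : Tendsto
      (fun t => ∑ j ∈ range (m - μ), Bco κ μ m j * (regLowerGamma (m - j) t / t ^ μ))
      (𝓝[≠] 0) (𝓝 0) := by
    simpa using tendsto_finsetSum (range (m - μ)) fun j hj =>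
      (tendsto_regLowerGamma_div_pow_of_lt (by simp at hj; omega)).const_mul (Bco κ μ m j)
  have htop := (tendsto_regLowerGamma_div_pow μ).const_mul (Bco κ μ m (m - μ))
  simp_rw [sum_range_succ, Nat.sub_sub_self hm]
  simpa [div_eq_mul_inv] using hlower.add htop

lemma Fcdf2_div_pow_eq (h : μ * κ + m ≠ 0) (hΔ : Δ₂ g κ μ m ≠ 0) (x : ℝ) :
    Fcdf2 g κ μ m x / x ^ μ = (∑ j ∈ range (m - μ + 1),
      Bco κ μ m j * (regLowerGamma (m - j) (x / Δ₂ g κ μ m) / (x / Δ₂ g κ μ m) ^ μ)) /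
        Δ₂ g κ μ m ^ μ := by
  rw [Fcdf2_eq_sum_regLowerGamma h, sum_div, sum_div]
  refine sum_congr rfl fun j _ => ?_
  rw [div_pow, div_div_eq_mul_div, mul_div_right_comm (regLowerGamma _ _), ← mul_assoc,
    mul_div_cancel_right₀ _ (pow_ne_zero μ hΔ), mul_div_assoc]

lemma Bco_div_factorial_div_Δ₂_pow (hg : 0 < g) (hκ : 0 < κ) (hμ : 1 ≤ μ) (hm : μ ≤ m) :
    Bco κ μ m (m - μ) / μ.factorial / Δ₂ g κ μ m ^ μ =
      (m : ℝ) ^ m * (μ : ℝ) ^ (μ - 1) * (1 + κ) ^ μ /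
        (g ^ μ * ((μ : ℝ) * κ + m) ^ m * (Nat.factorial (μ - 1) : ℝ)) := by
  have hm0 : (0 : ℝ) < m := by exact_mod_cast hμ.trans hm
  have hμ0 : (0 : ℝ) < μ := by exact_mod_cast hμ
  have hs : 0 < (μ : ℝ) * κ + m := by positivity
  have hB : Bco κ μ m (m - μ) = (m / (μ * κ + m)) ^ (m - μ) := by simp [Bco]
  have hΔ : Δ₂ g κ μ m = (μ * κ + m) * g / (m * μ * (1 + κ)) := by
    rw [Δ₂]
    field_simp
  have hfac : (μ.factorial : ℝ) = μ * (μ - 1).factorial := by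
    rw [← Nat.mul_factorial_pred (by omega : μ ≠ 0)]
    push_cast
    ring
  rw [hB, hΔ, hfac, ← pow_sub_mul_pow (m : ℝ) hm, ← pow_sub_mul_pow ((μ : ℝ) * κ + m) hm,
    div_pow, div_pow, mul_pow, mul_pow, mul_pow, ← pow_sub_mul_pow (μ : ℝ) hμ, pow_one]
  field_simp

end KappaMuShadowed

/-- Small-argument behavior of the κ-μ shadowed CDF, case `m ≥ μ`:
`F(x)/x^μ → m^m μ^{μ−1} (1+κ)^μ / (ḡ^μ (μκ+m)^m (μ−1)!)` as `x → 0⁺`. -/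
theorem stmt10 (g κ : ℝ) (μ m : ℕ) (hg : 0 < g) (hκ : 0 < κ) (hμ : 1 ≤ μ) (hm : μ ≤ m) :
    Filter.Tendsto (fun x : ℝ => Fcdf2 g κ μ m x / x ^ μ)
      (nhdsWithin 0 (Set.Ioi 0))
      (nhds ((m : ℝ) ^ m * (μ : ℝ) ^ (μ - 1) * (1 + κ) ^ μ /
        (g ^ μ * ((μ : ℝ) * κ + m) ^ m * (Nat.factorial (μ - 1) : ℝ)))) := by
  have hκm : (μ : ℝ) * κ + m ≠ 0 := by positivity
  have hΔ : Δ₂ g κ μ m ≠ 0 := by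
    have : (0 : ℝ) < m := by exact_mod_cast hμ.trans hm
    unfold Δ₂
    positivity
  have hscale : Tendsto (fun x : ℝ => x / Δ₂ g κ μ m) (𝓝[≠] 0) (𝓝[≠] 0) := by
    simpa [div_eq_mul_inv, Tendsto] using
      ((Homeomorph.mulRight₀ _ (inv_ne_zero hΔ)).map_punctured_nhds_eq 0).le
  rw [← Bco_div_factorial_div_Δ₂_pow hg hκ hμ hm, funext (Fcdf2_div_pow_eq hκm hΔ)]
  exact (((tendsto_sum_Bco_mul_regLowerGamma_div_pow hm).comp hscale).div_const _).mono_left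
    (nhdsWithin_mono _ fun x hx => hx.ne')
end

section
/- Laplace-type integral of the confluent hypergeometric function (the identity used to evaluate I₄ in Appendix C): for real a > 0, b > 0, s > 0 and 0 ≤ k < c, ∫₀^∞ e^{−ct}·t^{s−1}·₁F₁(a; b; kt) dt = Γ(s)·c^{−s}·₂F₁(a, s; b; k/c). -/
open MeasureTheory

/-- The confluent hypergeometric function `₁F₁(a; b; z)`. -/
noncomputable def oneF1 (a b z : ℝ) : ℝ :=
  ∑' n : ℕ, (ascPochhammer ℝ n).eval a * z ^ n /
    ((ascPochhammer ℝ n).eval b * (Nat.factorial n : ℝ))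

/-- The Gauss hypergeometric function `₂F₁(a₁, a₂; b; z)`. -/
noncomputable def twoF1 (a₁ a₂ b z : ℝ) : ℝ :=
  ∑' n : ℕ, (ascPochhammer ℝ n).eval a₁ * (ascPochhammer ℝ n).eval a₂ * z ^ n /
    ((ascPochhammer ℝ n).eval b * (Nat.factorial n : ℝ))

/-! Expand `₁F₁(a; b; kt)` in powers of `t` and integrate term by term: the moments
`∫₀^∞ e^{−ct} t^{s+n−1} dt = Γ(s + n) c^{−s−n} = Γ(s) (s)ₙ c^{−s} c^{−n}` turn the series of
`₁F₁` into `Γ(s) c^{−s}` times the series of `₂F₁(a, s; b; k/c)`. All terms are nonnegative and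
the latter series converges for `k/c < 1`, which justifies the exchange of sum and integral. -/

open Real Set

theorem Real.Gamma_add_nat_eq_mul_ascPochhammer {s : ℝ} (hs : ∀ k : ℕ, s ≠ -k) (n : ℕ) :
    Gamma (s + n) = Gamma s * (ascPochhammer ℝ n).eval s := by
  induction n with
  | zero => simp
  | succ n ih =>
    have hsn : s + n ≠ 0 := fun h => hs n (eq_neg_of_add_eq_zero_left h)
    rw [Nat.cast_succ, ← add_assoc, Gamma_add_one hsn, ih, ascPochhammer_succ_eval]
    ring

theorem MeasureTheory.integral_tsum_of_nonneg {α : Type*} [MeasurableSpace α] {μ : Measure α}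
    {F : ℕ → α → ℝ} (hF_int : ∀ n, Integrable (F n) μ) (hF_nonneg : ∀ n, 0 ≤ᵐ[μ] F n)
    (hF_sum : Summable fun n => ∫ x, F n x ∂μ) :
    ∫ x, ∑' n, F n x ∂μ = ∑' n, ∫ x, F n x ∂μ := by
  refine (integral_tsum_of_summable_integral_norm hF_int (hF_sum.congr fun n => ?_)).symm
  exact integral_congr_ae <| (hF_nonneg n).mono fun x hx => (Real.norm_of_nonneg hx).symm

theorem summable_twoF1_term {a₁ a₂ b x : ℝ}
    (hab : ∀ k : ℕ, (k : ℝ) ≠ -a₁ ∧ (k : ℝ) ≠ -a₂ ∧ (k : ℝ) ≠ -b) (hx : |x| < 1) :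
    Summable fun n : ℕ => (ascPochhammer ℝ n).eval a₁ * (ascPochhammer ℝ n).eval a₂ * x ^ n /
      ((ascPochhammer ℝ n).eval b * (Nat.factorial n : ℝ)) := by
  have hx_mem : x ∈ Metric.eball (0 : ℝ) (ordinaryHypergeometricSeries ℝ a₁ a₂ b).radius := by
    rwa [ordinaryHypergeometricSeries_radius_eq_one ℝ _ _ _ hab, Metric.mem_eball, edist_zero_right,
      enorm_eq_nnnorm, ← ENNReal.coe_one, ENNReal.coe_lt_coe, ← NNReal.coe_lt_coe, coe_nnnorm,
      Real.norm_eq_abs, NNReal.coe_one]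
  refine ((ordinaryHypergeometricSeries ℝ a₁ a₂ b).summable_norm_apply hx_mem).of_norm.congr
    fun n => ?_
  rw [ordinaryHypergeometricSeries_apply_eq, smul_eq_mul, div_eq_mul_inv, mul_inv]
  ring

theorem integral_exp_neg_mul_mul_rpow_mul_pow {s c : ℝ} (hs : 0 < s) (hc : 0 < c) (n : ℕ) :
    ∫ t in Ioi (0 : ℝ), exp (-c * t) * t ^ (s - 1) * t ^ n =
      Gamma s * c ^ (-s) * ((ascPochhammer ℝ n).eval s / c ^ n) := by
  have h_integrand : ∀ t ∈ Ioi (0 : ℝ),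
      exp (-c * t) * t ^ (s - 1) * t ^ n = t ^ ((s + n) - 1) * exp (-(c * t)) := by
    intro t ht
    rw [show (s + n) - 1 = (s - 1) + (n : ℝ) by ring, rpow_add ht, rpow_natCast, neg_mul]
    ring
  have hs_nat : ∀ k : ℕ, s ≠ -k := fun k h => by
    linarith [h ▸ hs, (Nat.cast_nonneg k : (0 : ℝ) ≤ k)]
  rw [setIntegral_congr_fun measurableSet_Ioi h_integrand,
    integral_rpow_mul_exp_neg_mul_Ioi (by positivity) hc, one_div, inv_rpow hc.le, rpow_add hc,
    rpow_natCast, rpow_neg hc.le, Gamma_add_nat_eq_mul_ascPochhammer hs_nat, mul_inv]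
  ring

theorem integrableOn_exp_neg_mul_mul_rpow_mul_pow {s c : ℝ} (hs : 0 < s) (hc : 0 < c) (n : ℕ) :
    IntegrableOn (fun t => exp (-c * t) * t ^ (s - 1) * t ^ n) (Ioi (0 : ℝ)) := by
  refine (integrableOn_rpow_mul_exp_neg_mul_rpow (p := 1) (s := s + n - 1)
    (by linarith [(Nat.cast_nonneg n : (0 : ℝ) ≤ n)]) one_pos hc).congr_fun
    (fun t ht => ?_) measurableSet_Ioi
  dsimp only
  rw [rpow_one, show s + (n : ℝ) - 1 = (s - 1) + (n : ℝ) by ring, rpow_add ht, rpow_natCast]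
  ring

theorem exp_neg_mul_mul_rpow_mul_oneF1_eq_tsum (a b c s k t : ℝ) :
    exp (-c * t) * t ^ (s - 1) * oneF1 a b (k * t) =
      ∑' n : ℕ, (ascPochhammer ℝ n).eval a * k ^ n /
        ((ascPochhammer ℝ n).eval b * (Nat.factorial n : ℝ)) *
        (exp (-c * t) * t ^ (s - 1) * t ^ n) := by
  rw [oneF1, ← tsum_mul_left]
  refine tsum_congr fun n => ?_
  rw [mul_pow]
  ring

/-- Laplace-type integral of the confluent hypergeometric function (identity used to evaluate
`I₄` in Appendix C): for `a > 0`, `b > 0`, `s > 0` and `0 ≤ k < c`,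
`∫₀^∞ e^{−ct} t^{s−1} ₁F₁(a; b; kt) dt = Γ(s) c^{−s} ₂F₁(a, s; b; k/c)`. -/
theorem stmt12 (a b s c k : ℝ) (ha : 0 < a) (hb : 0 < b) (hs : 0 < s)
    (hk : 0 ≤ k) (hkc : k < c) :
    ∫ t in Set.Ioi (0 : ℝ), Real.exp (-c * t) * t ^ (s - 1) * oneF1 a b (k * t) =
      Real.Gamma s * c ^ (-s) * twoF1 a s b (k / c) := by
  have hc : 0 < c := hk.trans_lt hkc
  set P : ℕ → ℝ → ℝ := fun n x => (ascPochhammer ℝ n).eval x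
  set F : ℕ → ℝ → ℝ := fun n t => P n a * k ^ n / (P n b * (Nat.factorial n : ℝ)) *
    (exp (-c * t) * t ^ (s - 1) * t ^ n)
  have hF_integral : ∀ n, ∫ t in Ioi (0 : ℝ), F n t =
      Gamma s * c ^ (-s) * (P n a * P n s * (k / c) ^ n / (P n b * (Nat.factorial n : ℝ))) := by
    intro n
    rw [integral_const_mul, integral_exp_neg_mul_mul_rpow_mul_pow hs hc n, div_pow]
    field_simp
    rfl
  have hF_nonneg : ∀ n, 0 ≤ᵐ[volume.restrict (Ioi 0)] F n := fun n =>
    (ae_restrict_mem measurableSet_Ioi).mono fun t (ht : 0 < t) => by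
      have := ascPochhammer_pos n a ha
      have := ascPochhammer_pos n b hb
      positivity
  have hF_sum : Summable fun n => ∫ t in Ioi (0 : ℝ), F n t := by
    simp_rw [hF_integral]
    refine (summable_twoF1_term (fun n => ?_) ?_).mul_left _
    · refine ⟨?_, ?_, ?_⟩ <;> intro h <;> linarith [(Nat.cast_nonneg n : (0 : ℝ) ≤ n)]
    · rw [abs_of_nonneg (by positivity), div_lt_one hc]
      exact hkc
  calc ∫ t in Ioi (0 : ℝ), exp (-c * t) * t ^ (s - 1) * oneF1 a b (k * t)
      = ∫ t in Ioi (0 : ℝ), ∑' n, F n t := by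
        simp_rw [exp_neg_mul_mul_rpow_mul_oneF1_eq_tsum]
        rfl
    _ = ∑' n, ∫ t in Ioi (0 : ℝ), F n t := integral_tsum_of_nonneg
        (fun n => (integrableOn_exp_neg_mul_mul_rpow_mul_pow hs hc n).const_mul _) hF_nonneg hF_sum
    _ = Gamma s * c ^ (-s) * twoF1 a s b (k / c) := by
        rw [tsum_congr hF_integral, tsum_mul_left, twoF1]
end

section
/- Proposition 5, case m_i ≥ μ_i (Eq. (24)): assume m_B ≥ μ_B ≥ 1, m_E ≥ μ_E ≥ 1 and N_A ≥ 1. Let F_B(x) = [F₁(x)]^{N_A} with F₁ the κ-μ shadowed CDF with parameters (N_B·ȳ_B, κ_B, N_B·μ_B, N_B·m_B), and let F_E be the κ-μ shadowed CDF with parameters (N_E·ȳ_E, κ_E, N_E·μ_E, N_E·m_E). Then the average secrecy capacity C̄_S = (1/ln 2)·∫₀^∞ (1 − F_B(γ))/(1+γ) dγ − (1/ln 2)·∫₀^∞ (1 − F_B(γ))·(1 − F_E(γ))/(1+γ) dγ equals (1/ln 2)·Σ_{k=1}^{N_A} (−1)^{k+1}·C(N_A,k)·Σ_{(s)∈ρ(k,ν_B)}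 (k!/(s₁!⋯s_{ν_B}!))·∏_{t=1}^{ν_B} [ (1/Δ₂ᴮ)^{ν_B−t}/(ν_B−t)!·Σ_{w=0}^{min(t−1,β_B)} Bᴮ_w ]^{s_t}·( e^{k/Δ₂ᴮ}·S!·Γᵤ(−S, k/Δ₂ᴮ) − Σ_{j=0}^{β_E} Bᴱⱼ·Σ_{r=0}^{ν_E−j−1} ((1/Δ₂ᴱ)^r/r!)·e^{k/Δ₂ᴮ + 1/Δ₂ᴱ}·(r+S)!·Γᵤ(−r−S, k/Δ₂ᴮ + 1/Δ₂ᴱ) ), where S = Σ_{t=1}^{ν_B}(ν_B−t)s_t. -/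
open MeasureTheory in
/-- The (generalized) upper incomplete gamma function `Γᵤ(a, x) = ∫_x^∞ t^{a−1} e^{−t} dt`,
convergent for every real `a` when `x > 0`. -/
noncomputable def Gammau (a x : ℝ) : ℝ := ∫ t in Set.Ioi x, t ^ (a - 1) * Real.exp (-t)

/-!
Swapping the two finite sums in the CDF gives `1 - F₁(γ) = e^{-γ/Δ₂ᴮ} Σ_t a_t γ^{ν_B-1-t}`.
Expanding `1 - F_B = 1 - (1 - (1 - F₁))^{N_A}` by the binomial theorem and each `(1 - F₁)^k` by
the multinomial theorem writes `1 - F_B` as a finite combination of `γ^S e^{-kγ/Δ₂ᴮ}`, and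
multiplying by `1 - F_E = Σ_j Bᴱ_j Σ_r (γ/Δ₂ᴱ)^r/r! e^{-γ/Δ₂ᴱ}` keeps this shape. Everything thus
reduces to `∫₀^∞ γⁿ e^{-bγ}/(1+γ) dγ = e^b n! Γᵤ(-n, b)`, proved by induction on `n` from
`γ^{n+1}/(1+γ) = γⁿ - γⁿ/(1+γ)` and `Γᵤ(a+1, b) = a Γᵤ(a, b) + b^a e^{-b}`, with the substitution
`u = b(1+γ)` for `n = 0`.
-/

open MeasureTheory Real Finset
open scoped Nat

lemma integrableOn_rpow_mul_exp_neg_Ioi {c x : ℝ} (hc : c ≤ 0) (hx : 0 < x) :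
    IntegrableOn (fun t => t ^ c * exp (-t)) (Set.Ioi x) := by
  refine ((exp_neg_integrableOn_Ioi x one_pos).const_mul (x ^ c)).mono' ?_ ?_
  · refine ContinuousOn.aestronglyMeasurable (fun t ht => ?_) measurableSet_Ioi
    exact ((continuousAt_rpow_const t c (Or.inl (hx.trans ht).ne')).mul
      (continuous_exp.comp continuous_neg).continuousAt).continuousWithinAt
  · filter_upwards [ae_restrict_mem measurableSet_Ioi] with t ht
    rw [norm_of_nonneg (mul_nonneg (rpow_nonneg (hx.trans ht).le c) (exp_pos _).le), neg_one_mul]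
    exact mul_le_mul_of_nonneg_right (rpow_le_rpow_of_nonpos hx ht.le hc) (exp_pos _).le

lemma Gammau_add_one {a x : ℝ} (ha : a ≤ 0) (hx : 0 < x) :
    Gammau (a + 1) x = a * Gammau a x + x ^ a * exp (-x) := by
  have hint := integrableOn_rpow_mul_exp_neg_Ioi ha hx
  have hint' := (integrableOn_rpow_mul_exp_neg_Ioi (c := a - 1) (by linarith) hx).const_mul a
  have hparts : ∫ t in Set.Ioi x, (t ^ a * exp (-t) - a * (t ^ (a - 1) * exp (-t)))
      = 0 - -(x ^ a * exp (-x)) := by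
    refine integral_Ioi_of_hasDerivAt_of_tendsto (f := fun t => -(t ^ a * exp (-t)))
      ((continuousAt_rpow_const x a (Or.inl hx.ne')).mul
        (continuous_exp.comp continuous_neg).continuousAt).neg.continuousWithinAt
      (fun t ht => ?_) (hint.sub hint') ?_
    · convert (((hasDerivAt_rpow_const (p := a) (Or.inl (hx.trans ht).ne')).mul
        (hasDerivAt_neg t).exp)).neg using 1
      · rfl
      · ring
    · simpa using (tendsto_rpow_mul_exp_neg_mul_atTop_nhds_zero a 1 one_pos).neg
  rw [integral_sub hint hint', integral_const_mul] at hparts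
  simp only [Gammau, add_sub_cancel_right] at hparts ⊢
  linarith

lemma integral_comp_add_right_Ioi (f : ℝ → ℝ) (a c : ℝ) :
    ∫ x in Set.Ioi a, f (x + c) = ∫ x in Set.Ioi (a + c), f x := by
  have := (measurePreserving_add_right volume c).setIntegral_preimage_emb
    (Homeomorph.addRight c).measurableEmbedding f (Set.Ioi (a + c))
  rwa [Set.preimage_add_const_Ioi, add_sub_cancel_right] at this

/-- `ln 2` times the ergodic capacity `∫ log₂ (1 + γ) dF(γ)` of a channel whose SNR has
complementary CDF `f = 1 - F`, after an integration by parts. -/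
noncomputable def stieltjesAtOne (f : ℝ → ℝ) : ℝ := ∫ γ in Set.Ioi 0, f γ / (1 + γ)

def StieltjesAtOneIntegrable (f : ℝ → ℝ) : Prop :=
  IntegrableOn (fun γ => f γ / (1 + γ)) (Set.Ioi 0)

lemma stieltjesAtOne_const_mul (c : ℝ) (f : ℝ → ℝ) :
    stieltjesAtOne (fun γ => c * f γ) = c * stieltjesAtOne f := by
  simp only [stieltjesAtOne, mul_div_assoc, integral_const_mul]

lemma StieltjesAtOneIntegrable.const_mul {f : ℝ → ℝ} (hf : StieltjesAtOneIntegrable f) (c : ℝ) :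
    StieltjesAtOneIntegrable fun γ => c * f γ := by
  simp only [StieltjesAtOneIntegrable, mul_div_assoc]
  exact Integrable.const_mul hf c

lemma stieltjesAtOne_sum {ι : Type*} (s : Finset ι) {f : ι → ℝ → ℝ}
    (hf : ∀ i ∈ s, StieltjesAtOneIntegrable (f i)) :
    stieltjesAtOne (fun γ => ∑ i ∈ s, f i γ) = ∑ i ∈ s, stieltjesAtOne (f i) := by
  simp only [stieltjesAtOne, sum_div]
  exact integral_finsetSum s hf

lemma StieltjesAtOneIntegrable.sum {ι : Type*} (s : Finset ι) {f : ι → ℝ → ℝ}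
    (hf : ∀ i ∈ s, StieltjesAtOneIntegrable (f i)) :
    StieltjesAtOneIntegrable fun γ => ∑ i ∈ s, f i γ := by
  simp only [StieltjesAtOneIntegrable, sum_div]
  exact integrable_finsetSum s hf

lemma stieltjesAtOne_exp_neg_mul {b : ℝ} (hb : 0 < b) :
    stieltjesAtOne (fun t => exp (-(b * t))) = exp b * Gammau 0 b := by
  have hsub : Gammau 0 b
      = b * ∫ v in Set.Ioi 0, (b * (v + 1)) ^ ((0 : ℝ) - 1) * exp (-(b * (v + 1))) := by
    have h := integral_comp_mul_left_Ioi' (fun t => t ^ ((0 : ℝ) - 1) * exp (-t)) 1 hb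
    rw [mul_one] at h
    rw [Gammau, ← h, smul_eq_mul,
      integral_comp_add_right_Ioi (fun u => (b * u) ^ ((0 : ℝ) - 1) * exp (-(b * u))), zero_add]
  rw [stieltjesAtOne, hsub, ← integral_const_mul, ← integral_const_mul]
  refine setIntegral_congr_fun measurableSet_Ioi fun v (hv : 0 < v) => ?_
  rw [zero_sub, rpow_neg_one, show -(b * (v + 1)) = -b + -(b * v) by ring, exp_add]
  field_simp
  rw [mul_assoc, ← exp_add, add_neg_cancel, exp_zero]
  ring

lemma integrableOn_pow_mul_exp_neg_mul {b : ℝ} (hb : 0 < b) (n : ℕ) :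
    IntegrableOn (fun t => t ^ n * exp (-(b * t))) (Set.Ioi 0) := by
  refine (integrableOn_rpow_mul_exp_neg_mul_rpow (s := n)
    (neg_one_lt_zero.trans_le n.cast_nonneg) one_pos hb).congr_fun (fun t _ => ?_) measurableSet_Ioi
  simp [rpow_natCast]

lemma integral_pow_mul_exp_neg_mul {b : ℝ} (hb : 0 < b) (n : ℕ) :
    ∫ t in Set.Ioi 0, t ^ n * exp (-(b * t)) = n ! / b ^ (n + 1) := by
  have h := integral_rpow_mul_exp_neg_mul_Ioi (a := n + 1) (by positivity) hb
  simp only [add_sub_cancel_right, rpow_natCast] at h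
  rw [h, Gamma_nat_eq_factorial, ← Nat.cast_add_one, rpow_natCast, one_div, inv_pow]
  field_simp

lemma stieltjesAtOneIntegrable_pow_mul_exp_neg_mul {b : ℝ} (hb : 0 < b) (n : ℕ) :
    StieltjesAtOneIntegrable fun t => t ^ n * exp (-(b * t)) := by
  refine (integrableOn_pow_mul_exp_neg_mul hb n).mono' ?_ ?_
  · exact ((by fun_prop : Continuous fun t : ℝ => t ^ n * exp (-(b * t))).continuousOn.div
      (by fun_prop) fun t (ht : 0 < t) => by positivity).aestronglyMeasurable measurableSet_Ioi
  · filter_upwards [ae_restrict_mem measurableSet_Ioi] with t (ht : 0 < t)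
    rw [norm_of_nonneg (by positivity)]
    exact div_le_self (by positivity) (by linarith)

theorem stieltjesAtOne_pow_mul_exp_neg_mul {b : ℝ} (hb : 0 < b) (n : ℕ) :
    stieltjesAtOne (fun t => t ^ n * exp (-(b * t))) = exp b * n ! * Gammau (-n) b := by
  induction n with
  | zero => simpa using stieltjesAtOne_exp_neg_mul hb
  | succ n ih =>
    rw [stieltjesAtOne] at ih ⊢
    have hsplit : ∀ t ∈ Set.Ioi (0 : ℝ), t ^ (n + 1) * exp (-(b * t)) / (1 + t)
        = t ^ n * exp (-(b * t)) - t ^ n * exp (-(b * t)) / (1 + t) := fun t (ht : 0 < t) => by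
      field_simp
      ring
    have hΓ := Gammau_add_one (a := -(n + 1)) (by linarith [n.cast_nonneg (α := ℝ)]) hb
    rw [show -((n : ℝ) + 1) + 1 = -n by ring, rpow_neg hb.le, ← Nat.cast_add_one,
      rpow_natCast] at hΓ
    rw [setIntegral_congr_fun measurableSet_Ioi hsplit, integral_sub
      (integrableOn_pow_mul_exp_neg_mul hb n) (stieltjesAtOneIntegrable_pow_mul_exp_neg_mul hb n),
      integral_pow_mul_exp_neg_mul hb, ih, hΓ, Nat.factorial_succ, Nat.cast_mul,
      Nat.cast_add_one, exp_neg]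
    field_simp
    ring

lemma Nat.cast_multinomial {α K : Type*} [Field K] [CharZero K] (s : Finset α) (f : α → ℕ) :
    (Nat.multinomial s f : K) = (∑ i ∈ s, f i)! / ∏ i ∈ s, ((f i)! : K) := by
  rw [eq_div_iff (prod_ne_zero_iff.mpr fun i _ => Nat.cast_ne_zero.mpr (Nat.factorial_ne_zero _)),
    ← Nat.cast_prod, ← Nat.cast_mul, mul_comm, Nat.multinomial_spec]

lemma one_sub_one_sub_pow {R : Type*} [CommRing R] (G : R) (N : ℕ) :
    1 - (1 - G) ^ N = ∑ k ∈ Icc 1 N, (-1) ^ (k + 1) * (N.choose k : R) * G ^ k := by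
  rw [← neg_add_eq_sub G 1, add_pow, range_eq_Ico, sum_eq_sum_Ico_succ_bot (Nat.zero_lt_succ N),
    zero_add, Nat.succ_eq_add_one, Finset.Ico_add_one_right_eq_Icc]
  simp only [pow_zero, one_pow, mul_one, Nat.choose_zero_right, Nat.cast_one, sub_add_cancel_left,
    ← sum_neg_distrib, neg_pow G, pow_succ]
  refine sum_congr rfl fun k _ => ?_
  ring

lemma exp_mul_sum_pow {ν : ℕ} (a : Fin ν → ℝ) (n : Fin ν → ℕ) (Δ x : ℝ) (k : ℕ) :
    (exp (-(x / Δ)) * ∑ t, a t * x ^ n t) ^ k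
      = ∑ s ∈ Nat.antidiagonalTuple ν k, ((k ! : ℝ) / ∏ t, ((s t)! : ℝ)) * (∏ t, a t ^ s t) *
          ((x ^ ∑ t, n t * s t) * exp (-(k / Δ * x))) := by
  rw [mul_pow, ← exp_nat_mul, sum_pow_eq_sum_piAntidiag, piAntidiag_univ_fin_eq_antidiagonalTuple,
    mul_sum]
  refine sum_congr rfl fun s hs => ?_
  have hprod : ∏ t, (a t * x ^ n t) ^ s t = (∏ t, a t ^ s t) * x ^ ∑ t, n t * s t := by
    simp only [mul_pow, ← pow_mul, prod_mul_distrib, prod_pow_eq_pow_sum]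
  rw [hprod, Nat.cast_multinomial, Nat.mem_antidiagonalTuple.mp hs,
    show (k : ℝ) * -(x / Δ) = -(k / Δ * x) by ring]
  ring

lemma sum_range_mul_sum_range_sub {M : Type*} [CommSemiring M] (B c : ℕ → M) (β ν : ℕ) :
    ∑ j ∈ range (β + 1), B j * ∑ r ∈ range (ν - j), c r
      = ∑ t : Fin ν, (∑ w ∈ range (min t.1 β + 1), B w) * c (ν - 1 - t.1) := by
  rw [Fin.sum_univ_eq_sum_range (fun t => (∑ w ∈ range (min t β + 1), B w) * c (ν - 1 - t)),
    ← sum_range_reflect _ ν]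
  have hreflect : ∀ r ∈ range ν,
      (∑ w ∈ range (min (ν - 1 - r) β + 1), B w) * c (ν - 1 - (ν - 1 - r))
        = ∑ w ∈ range (min (ν - 1 - r) β + 1), B w * c r := fun r hr => by
    rw [sum_mul, Nat.sub_sub_self (Nat.le_sub_one_of_lt (mem_range.mp hr))]
  rw [sum_congr rfl hreflect]
  simp_rw [mul_sum]
  exact sum_comm' fun j r => by simp only [mem_range]; omega

lemma one_sub_Fcdf2 (g κ : ℝ) (μ m : ℕ) (x : ℝ) :
    1 - Fcdf2 g κ μ m x = exp (-(x / Δ₂ g κ μ m)) *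
      ∑ t : Fin m, ((1 / Δ₂ g κ μ m) ^ (m - 1 - t.1) / ((m - 1 - t.1)! : ℝ) *
        ∑ w ∈ range (min t.1 (m - μ) + 1), Bco κ μ m w) * x ^ (m - 1 - t.1) := by
  simp only [Fcdf2, sub_sub_cancel, neg_div, mul_right_comm _ (exp _), ← sum_mul]
  rw [mul_comm, sum_range_mul_sum_range_sub]
  congr 1
  refine sum_congr rfl fun t _ => ?_
  rw [div_pow, one_div_pow]
  ring

lemma Δ₂_pos {g κ : ℝ} {μ m : ℕ} (hg : 0 < g) (hκ : 0 ≤ κ) (hμ : 0 < μ) (hm : 0 < m) :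
    0 < Δ₂ g κ μ m := by
  have : (0 : ℝ) < μ := Nat.cast_pos.mpr hμ
  have : (0 : ℝ) < m := Nat.cast_pos.mpr hm
  unfold Δ₂
  positivity

theorem stieltjesAtOne_one_sub_pow_mul {ν : ℕ} {F : ℝ → ℝ} {Δ : ℝ} (a : Fin ν → ℝ)
    (n : Fin ν → ℕ) (hF : ∀ x, 1 - F x = exp (-(x / Δ)) * ∑ t, a t * x ^ n t) (hΔ : 0 < Δ)
    (ψ : ℝ → ℝ) (hψ : ∀ (p : ℕ) (b : ℝ), 0 < b →
      StieltjesAtOneIntegrable fun x => x ^ p * exp (-(b * x)) * ψ x) (N : ℕ) :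
    stieltjesAtOne (fun x => (1 - F x ^ N) * ψ x) =
      ∑ k ∈ Icc 1 N, (-1) ^ (k + 1) * (N.choose k : ℝ) *
        ∑ s ∈ Nat.antidiagonalTuple ν k, ((k ! : ℝ) / ∏ t, ((s t)! : ℝ)) * (∏ t, a t ^ s t) *
          stieltjesAtOne (fun x => x ^ (∑ t, n t * s t) * exp (-(k / Δ * x)) * ψ x) := by
  have hexpand : (fun x => (1 - F x ^ N) * ψ x) = fun x =>
      ∑ k ∈ Icc 1 N, (-1) ^ (k + 1) * (N.choose k : ℝ) *
        ∑ s ∈ Nat.antidiagonalTuple ν k, ((k ! : ℝ) / ∏ t, ((s t)! : ℝ)) * (∏ t, a t ^ s t) *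
          (x ^ (∑ t, n t * s t) * exp (-(k / Δ * x)) * ψ x) := by
    funext x
    rw [← sub_sub_cancel 1 (F x), hF, one_sub_one_sub_pow, sum_mul]
    refine sum_congr rfl fun k _ => ?_
    rw [exp_mul_sum_pow, mul_assoc, sum_mul]
    simp only [mul_assoc]
  have hrate : ∀ k ∈ Icc 1 N, 0 < (k : ℝ) / Δ := fun k hk =>
    div_pos (Nat.cast_pos.mpr (mem_Icc.mp hk).1) hΔ
  rw [hexpand, stieltjesAtOne_sum]
  · refine sum_congr rfl fun k hk => ?_
    rw [stieltjesAtOne_const_mul, stieltjesAtOne_sum]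
    · simp only [stieltjesAtOne_const_mul]
    · exact fun s _ => (hψ _ _ (hrate k hk)).const_mul _
  · exact fun k hk =>
      (StieltjesAtOneIntegrable.sum _ fun s _ => (hψ _ _ (hrate k hk)).const_mul _).const_mul _

lemma pow_mul_exp_mul_one_sub_Fcdf2 (g κ : ℝ) (μ m p : ℕ) (b x : ℝ) :
    x ^ p * exp (-(b * x)) * (1 - Fcdf2 g κ μ m x) =
      ∑ j ∈ range (m - μ + 1), Bco κ μ m j * ∑ r ∈ range (m - j),
        (1 / Δ₂ g κ μ m) ^ r / (r ! : ℝ) *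
          (x ^ (r + p) * exp (-((b + 1 / Δ₂ g κ μ m) * x))) := by
  have hexp : exp (-((b + 1 / Δ₂ g κ μ m) * x)) = exp (-(b * x)) * exp (-x / Δ₂ g κ μ m) := by
    rw [← exp_add]
    ring_nf
  simp only [Fcdf2, sub_sub_cancel, mul_sum, hexp]
  refine sum_congr rfl fun j _ => sum_congr rfl fun r _ => ?_
  rw [div_pow, one_div_pow, pow_add]
  ring

lemma stieltjesAtOneIntegrable_pow_mul_exp_mul_one_sub_Fcdf2 {g κ b : ℝ} {μ m : ℕ}
    (hb : 0 < b) (hΔ : 0 < Δ₂ g κ μ m) (p : ℕ) :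
    StieltjesAtOneIntegrable fun x => x ^ p * exp (-(b * x)) * (1 - Fcdf2 g κ μ m x) := by
  simp only [pow_mul_exp_mul_one_sub_Fcdf2]
  refine StieltjesAtOneIntegrable.sum _ fun j _ => .const_mul (.sum _ fun r _ => .const_mul ?_ _) _
  exact stieltjesAtOneIntegrable_pow_mul_exp_neg_mul (by positivity) _

lemma stieltjesAtOne_pow_mul_exp_mul_one_sub_Fcdf2 {g κ b : ℝ} {μ m : ℕ}
    (hb : 0 < b) (hΔ : 0 < Δ₂ g κ μ m) (p : ℕ) :
    stieltjesAtOne (fun x => x ^ p * exp (-(b * x)) * (1 - Fcdf2 g κ μ m x)) =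
      ∑ j ∈ range (m - μ + 1), Bco κ μ m j * ∑ r ∈ range (m - j),
        (1 / Δ₂ g κ μ m) ^ r / (r ! : ℝ) * exp (b + 1 / Δ₂ g κ μ m) * ((r + p)! : ℝ) *
          Gammau (-(r : ℝ) - p) (b + 1 / Δ₂ g κ μ m) := by
  have hrate : 0 < b + 1 / Δ₂ g κ μ m := by positivity
  simp only [pow_mul_exp_mul_one_sub_Fcdf2]
  rw [stieltjesAtOne_sum _ fun j _ => .const_mul (.sum _ fun r _ => .const_mul
    (stieltjesAtOneIntegrable_pow_mul_exp_neg_mul hrate _) _) _]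
  refine sum_congr rfl fun j _ => ?_
  rw [stieltjesAtOne_const_mul, stieltjesAtOne_sum _ fun r _ => .const_mul
    (stieltjesAtOneIntegrable_pow_mul_exp_neg_mul hrate _) _]
  refine congrArg _ (sum_congr rfl fun r _ => ?_)
  rw [stieltjesAtOne_const_mul, stieltjesAtOne_pow_mul_exp_neg_mul hrate, Nat.cast_add, neg_add,
    ← sub_eq_add_neg]
  ring

open MeasureTheory Finset in
theorem stmt14_general (yB κB yE κE : ℝ) (μB mB NB μE mE NE NA : ℕ)
    (hyB : 0 < yB) (hκB : 0 < κB) (hyE : 0 < yE) (hκE : 0 < κE)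
    (hμB : 1 ≤ μB) (hmB : μB ≤ mB) (hμE : 1 ≤ μE) (hmE : μE ≤ mE)
    (hNB : 1 ≤ NB) (hNE : 1 ≤ NE) :
    ((1 / Real.log 2) * ∫ γ in Set.Ioi (0 : ℝ),
        (1 - (Fcdf2 (NB * yB) κB (NB * μB) (NB * mB) γ) ^ NA) / (1 + γ))
      - ((1 / Real.log 2) * ∫ γ in Set.Ioi (0 : ℝ),
        (1 - (Fcdf2 (NB * yB) κB (NB * μB) (NB * mB) γ) ^ NA) *
          (1 - Fcdf2 (NE * yE) κE (NE * μE) (NE * mE) γ) / (1 + γ)) =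
      (1 / Real.log 2) *
        ∑ k ∈ Finset.Icc 1 NA, (-1 : ℝ) ^ (k + 1) * (Nat.choose NA k : ℝ) *
          ∑ s ∈ Finset.Nat.antidiagonalTuple (NB * mB) k,
            ((Nat.factorial k : ℝ) / ∏ t, (Nat.factorial (s t) : ℝ)) *
            (∏ t : Fin (NB * mB),
              ((1 / Δ₂ (NB * yB) κB (NB * μB) (NB * mB)) ^ (NB * mB - 1 - t.1) /
                  (Nat.factorial (NB * mB - 1 - t.1) : ℝ) *
                ∑ w ∈ Finset.range (min t.1 (NB * mB - NB * μB) + 1),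
                  Bco κB (NB * μB) (NB * mB) w) ^ (s t)) *
            (Real.exp ((k : ℝ) / Δ₂ (NB * yB) κB (NB * μB) (NB * mB)) *
                (Nat.factorial (∑ t : Fin (NB * mB), (NB * mB - 1 - t.1) * s t) : ℝ) *
                Gammau (-((∑ t : Fin (NB * mB), (NB * mB - 1 - t.1) * s t : ℕ) : ℝ))
                  ((k : ℝ) / Δ₂ (NB * yB) κB (NB * μB) (NB * mB))
              - ∑ j ∈ Finset.range (NE * mE - NE * μE + 1),
                  Bco κE (NE * μE) (NE * mE) j *
                  ∑ r ∈ Finset.range (NE * mE - j),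
                    ((1 / Δ₂ (NE * yE) κE (NE * μE) (NE * mE)) ^ r /
                        (Nat.factorial r : ℝ)) *
                    Real.exp ((k : ℝ) / Δ₂ (NB * yB) κB (NB * μB) (NB * mB)
                        + 1 / Δ₂ (NE * yE) κE (NE * μE) (NE * mE)) *
                    (Nat.factorial (r + ∑ t : Fin (NB * mB), (NB * mB - 1 - t.1) * s t) : ℝ) *
                    Gammau (-(r : ℝ)
                        - ((∑ t : Fin (NB * mB), (NB * mB - 1 - t.1) * s t : ℕ) : ℝ))
                      ((k : ℝ) / Δ₂ (NB * yB) κB (NB * μB) (NB * mB)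
                        + 1 / Δ₂ (NE * yE) κE (NE * μE) (NE * mE))) := by
  have hΔB : 0 < Δ₂ (NB * yB) κB (NB * μB) (NB * mB) :=
    Δ₂_pos (by positivity) hκB.le (Nat.mul_pos hNB hμB) (Nat.mul_pos hNB (hμB.trans hmB))
  have hΔE : 0 < Δ₂ (NE * yE) κE (NE * μE) (NE * mE) :=
    Δ₂_pos (by positivity) hκE.le (Nat.mul_pos hNE hμE) (Nat.mul_pos hNE (hμE.trans hmE))
  have hBob := stieltjesAtOne_one_sub_pow_mul _ _ (one_sub_Fcdf2 _ _ _ _) hΔB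
  have hCapB := hBob (fun _ => 1) (fun p b hb => by
    simpa only [mul_one] using stieltjesAtOneIntegrable_pow_mul_exp_neg_mul hb p) NA
  have hCapBE := hBob _
    (fun p b hb => stieltjesAtOneIntegrable_pow_mul_exp_mul_one_sub_Fcdf2 hb hΔE p) NA
  simp only [mul_one] at hCapB
  change 1 / log 2 * stieltjesAtOne _ - 1 / log 2 * stieltjesAtOne _ = _
  rw [hCapB, hCapBE, ← mul_sub, ← sum_sub_distrib]
  refine congrArg _ (sum_congr rfl fun k hk => ?_)
  have hrate : 0 < (k : ℝ) / Δ₂ (NB * yB) κB (NB * μB) (NB * mB) :=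
    div_pos (Nat.cast_pos.mpr (mem_Icc.mp hk).1) hΔB
  simp only [stieltjesAtOne_pow_mul_exp_neg_mul hrate,
    stieltjesAtOne_pow_mul_exp_mul_one_sub_Fcdf2 hrate hΔE, ← mul_sub, ← sum_sub_distrib]

open MeasureTheory Finset in
/-- Proposition 5, case `m_i ≥ μ_i` (Eq. (24)): closed form of the average secrecy capacity
`C̄_S = (1/ln 2)∫₀^∞ (1−F_B(γ))/(1+γ) dγ − (1/ln 2)∫₀^∞ (1−F_B(γ))(1−F_E(γ))/(1+γ) dγ`
for the TAS/MRC MIMO κ-μ shadowed wiretap channel. -/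
theorem stmt14 (yB κB yE κE : ℝ) (μB mB NB μE mE NE NA : ℕ)
    (hyB : 0 < yB) (hκB : 0 < κB) (hyE : 0 < yE) (hκE : 0 < κE)
    (hμB : 1 ≤ μB) (hmB : μB ≤ mB) (hμE : 1 ≤ μE) (hmE : μE ≤ mE)
    (hNB : 1 ≤ NB) (hNE : 1 ≤ NE) (hNA : 1 ≤ NA) :
    ((1 / Real.log 2) * ∫ γ in Set.Ioi (0 : ℝ),
        (1 - (Fcdf2 (NB * yB) κB (NB * μB) (NB * mB) γ) ^ NA) / (1 + γ))
      - ((1 / Real.log 2) * ∫ γ in Set.Ioi (0 : ℝ),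
        (1 - (Fcdf2 (NB * yB) κB (NB * μB) (NB * mB) γ) ^ NA) *
          (1 - Fcdf2 (NE * yE) κE (NE * μE) (NE * mE) γ) / (1 + γ)) =
      (1 / Real.log 2) *
        ∑ k ∈ Finset.Icc 1 NA, (-1 : ℝ) ^ (k + 1) * (Nat.choose NA k : ℝ) *
          ∑ s ∈ Finset.Nat.antidiagonalTuple (NB * mB) k,
            ((Nat.factorial k : ℝ) / ∏ t, (Nat.factorial (s t) : ℝ)) *
            (∏ t : Fin (NB * mB),
              ((1 / Δ₂ (NB * yB) κB (NB * μB) (NB * mB)) ^ (NB * mB - 1 - t.1) /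
                  (Nat.factorial (NB * mB - 1 - t.1) : ℝ) *
                ∑ w ∈ Finset.range (min t.1 (NB * mB - NB * μB) + 1),
                  Bco κB (NB * μB) (NB * mB) w) ^ (s t)) *
            (Real.exp ((k : ℝ) / Δ₂ (NB * yB) κB (NB * μB) (NB * mB)) *
                (Nat.factorial (∑ t : Fin (NB * mB), (NB * mB - 1 - t.1) * s t) : ℝ) *
                Gammau (-((∑ t : Fin (NB * mB), (NB * mB - 1 - t.1) * s t : ℕ) : ℝ))
                  ((k : ℝ) / Δ₂ (NB * yB) κB (NB * μB) (NB * mB))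
              - ∑ j ∈ Finset.range (NE * mE - NE * μE + 1),
                  Bco κE (NE * μE) (NE * mE) j *
                  ∑ r ∈ Finset.range (NE * mE - j),
                    ((1 / Δ₂ (NE * yE) κE (NE * μE) (NE * mE)) ^ r /
                        (Nat.factorial r : ℝ)) *
                    Real.exp ((k : ℝ) / Δ₂ (NB * yB) κB (NB * μB) (NB * mB)
                        + 1 / Δ₂ (NE * yE) κE (NE * μE) (NE * mE)) *
                    (Nat.factorial (r + ∑ t : Fin (NB * mB), (NB * mB - 1 - t.1) * s t) : ℝ) *
                    Gammau (-(r : ℝ)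
                        - ((∑ t : Fin (NB * mB), (NB * mB - 1 - t.1) * s t : ℕ) : ℝ))
                      ((k : ℝ) / Δ₂ (NB * yB) κB (NB * μB) (NB * mB)
                        + 1 / Δ₂ (NE * yE) κE (NE * μE) (NE * mE))) :=
  stmt14_general yB κB yE κE μB mB NB μE mE NE NA hyB hκB hyE hκE hμB hmB hμE hmE hNB hNE
end
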